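/- Let F̂ be an (n-1)×(n-1) symmetric matrix and Q the Householder reflector from v = (1,...,1,1+√n)^T. Then there exist a unique vector f ∈ R^{n-1} and scalar ξ ∈ R such that Q · [[F̂, f],[f^T, ξ]] · Q is hollow (has zero diagonal), and they are given by (2f; ξ) = √n · Q · diag(Q [[F̂,0],[0,0]] Q), where diag(M) denotes the vector of diagonal entries of M. -/

import Mathlib

/-!
Let `e` be the last standard basis vector and `w = (2f; ξ)`. The bordered matrix is
`B = F₀ + ½ (w eᵀ + e wᵀ)`, and the reflector sends `e` to `-𝟙 / √(n+1)`, so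
`diag (Q B Q) = diag (Q F₀ Q) - Q w / √(n+1)`. Hence `Q B Q` is hollow iff
`Q w = √(n+1) diag (Q F₀ Q)`, i.e. (as `Q` is an involution) iff
`w = √(n+1) Q diag (Q F₀ Q)`, and `w` determines `(f, ξ)`.
-/

open Matrix

namespace Matrix

variable {ι K : Type*} [Fintype ι]

theorem IsSymm.diag_mul_vecMulVec_add_vecMulVec_mul [CommRing K] {M : Matrix ι ι K}
    (hM : M.IsSymm) (a b : ι → K) :
    diag (M * (vecMulVec a b + vecMulVec b a) * M) = (2 : K) • ((M *ᵥ a) * (M *ᵥ b)) := by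
  rw [Matrix.mul_add, Matrix.add_mul, mul_vecMulVec, mul_vecMulVec, vecMulVec_mul, vecMulVec_mul,
    ← mulVec_transpose, ← mulVec_transpose, hM.eq, diag_add, diag_vecMulVec, diag_vecMulVec,
    mul_comm (M *ᵥ b), two_smul]

variable [DecidableEq ι] [Field K]

def householder (v : ι → K) : Matrix ι ι K := 1 - (2 / (v ⬝ᵥ v)) • vecMulVec v v

variable (v : ι → K)

theorem householder_isSymm : (householder v).IsSymm := by
  simp only [IsSymm, householder, transpose_sub, transpose_one, transpose_smul, transpose_vecMulVec]

theorem householder_mulVec (x : ι → K) :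
    householder v *ᵥ x = x - (2 / (v ⬝ᵥ v) * (v ⬝ᵥ x)) • v := by
  simp [householder, sub_mulVec, smul_mulVec, vecMulVec_mulVec, smul_smul, mul_comm]

variable {v}

theorem householder_mulVec_involutive (hv : v ⬝ᵥ v ≠ 0) :
    Function.Involutive (householder v *ᵥ ·) := by
  intro x
  dsimp only
  have hvQx : v ⬝ᵥ householder v *ᵥ x = -(v ⬝ᵥ x) := by
    rw [householder_mulVec, dotProduct_sub, dotProduct_smul, smul_eq_mul]
    field_simp
    ring
  rw [householder_mulVec v (householder v *ᵥ x), hvQx, householder_mulVec]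
  module

end Matrix

section Bordered

variable {K : Type*} [Field K] {n : ℕ}

def borderedMatrix (F : Matrix (Fin n) (Fin n) K) (f : Fin n → K) (ξ : K) :
    Matrix (Fin (n + 1)) (Fin (n + 1)) K :=
  of fun i j =>
    Fin.lastCases (Fin.lastCases ξ (fun j' => f j') j)
      (fun i' => Fin.lastCases (f i') (fun j' => F i' j') j) i

def borderVec (f : Fin n → K) (ξ : K) : Fin (n + 1) → K :=
  fun k => Fin.lastCases ξ (fun i => 2 * f i) k

variable [NeZero (2 : K)]

theorem borderedMatrix_eq (F : Matrix (Fin n) (Fin n) K) (f : Fin n → K) (ξ : K) :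
    borderedMatrix F f ξ = borderedMatrix F 0 0 + (2 : K)⁻¹ •
      (vecMulVec (borderVec f ξ) (Pi.single (Fin.last n) 1) +
        vecMulVec (Pi.single (Fin.last n) 1) (borderVec f ξ)) := by
  ext i j
  induction i using Fin.lastCases <;> induction j using Fin.lastCases <;>
    simp only [borderedMatrix, borderVec, of_apply, Fin.lastCases_last, Fin.lastCases_castSucc,
      Pi.zero_apply, Matrix.add_apply, Matrix.smul_apply, smul_eq_mul, vecMulVec_apply,
      Pi.single_eq_same, Pi.single_eq_of_ne (Fin.castSucc_ne_last _), mul_one, one_mul,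
      mul_zero, zero_mul, add_zero, zero_add, ← two_mul] <;>
    field_simp

theorem borderVec_bijective :
    Function.Bijective (fun p : (Fin n → K) × K => borderVec p.1 p.2) := by
  refine Function.bijective_iff_has_inverse.2
    ⟨fun w => (fun i => w i.castSucc / 2, w (Fin.last n)), fun p => ?_, fun w => ?_⟩
  · simp [borderVec, two_ne_zero]
  · ext k
    induction k using Fin.lastCases <;> simp [borderVec, mul_div_cancel₀, two_ne_zero]

end Bordered

section Hollow

variable {n : ℕ}

noncomputable def onesPlusSqrtLast (n : ℕ) : Fin (n + 1) → ℝ :=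
  fun i => if i = Fin.last n then 1 + Real.sqrt (n + 1) else 1

theorem onesPlusSqrtLast_dotProduct_self :
    onesPlusSqrtLast n ⬝ᵥ onesPlusSqrtLast n =
      2 * Real.sqrt (n + 1) * (1 + Real.sqrt (n + 1)) := by
  have hs : Real.sqrt (n + 1) ^ 2 = n + 1 := Real.sq_sqrt (by positivity)
  simp only [dotProduct, onesPlusSqrtLast, Fin.sum_univ_castSucc, Fin.castSucc_ne_last,
    if_true, if_false, mul_one, Finset.sum_const, Finset.card_univ, Fintype.card_fin, nsmul_eq_mul]
  linear_combination -hs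

theorem householder_onesPlusSqrtLast_mulVec_single_last :
    householder (onesPlusSqrtLast n) *ᵥ Pi.single (Fin.last n) 1 =
      fun _ => -(Real.sqrt (n + 1))⁻¹ := by
  have hs : 0 < Real.sqrt (n + 1) := Real.sqrt_pos.2 (by positivity)
  ext k
  rw [householder_mulVec, onesPlusSqrtLast_dotProduct_self, dotProduct_single]
  induction k using Fin.lastCases <;>
    simp only [onesPlusSqrtLast, Pi.sub_apply, Pi.smul_apply, smul_eq_mul, if_true, if_false,
      Fin.castSucc_ne_last, Pi.single_eq_same, Pi.single_eq_of_ne (Fin.castSucc_ne_last _),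
      mul_one] <;>
    field_simp <;> ring

theorem diag_householder_mul_borderedMatrix_mul_householder (F : Matrix (Fin n) (Fin n) ℝ)
    (f : Fin n → ℝ) (ξ : ℝ) :
    diag (householder (onesPlusSqrtLast n) * borderedMatrix F f ξ *
        householder (onesPlusSqrtLast n)) =
      diag (householder (onesPlusSqrtLast n) * borderedMatrix F 0 0 *
        householder (onesPlusSqrtLast n)) -
      (Real.sqrt (n + 1))⁻¹ • (householder (onesPlusSqrtLast n) *ᵥ borderVec f ξ) := by
  rw [borderedMatrix_eq, Matrix.mul_add, Matrix.add_mul, diag_add, Matrix.mul_smul,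
    Matrix.smul_mul, diag_smul, (householder_isSymm _).diag_mul_vecMulVec_add_vecMulVec_mul,
    householder_onesPlusSqrtLast_mulVec_single_last, smul_smul, inv_mul_cancel₀ two_ne_zero,
    one_smul]
  ext k
  simp only [Pi.add_apply, Pi.sub_apply, Pi.mul_apply, Pi.smul_apply, smul_eq_mul]
  ring

theorem diag_householder_mul_borderedMatrix_mul_householder_eq_zero_iff
    (F : Matrix (Fin n) (Fin n) ℝ) (f : Fin n → ℝ) (ξ : ℝ) :
    diag (householder (onesPlusSqrtLast n) * borderedMatrix F f ξ *
        householder (onesPlusSqrtLast n)) = 0 ↔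
      borderVec f ξ = Real.sqrt (n + 1) • householder (onesPlusSqrtLast n) *ᵥ
        diag (householder (onesPlusSqrtLast n) * borderedMatrix F 0 0 *
          householder (onesPlusSqrtLast n)) := by
  have hs : 0 < Real.sqrt (n + 1) := Real.sqrt_pos.2 (by positivity)
  have hv : onesPlusSqrtLast n ⬝ᵥ onesPlusSqrtLast n ≠ 0 := by
    rw [onesPlusSqrtLast_dotProduct_self]; positivity
  rw [diag_householder_mul_borderedMatrix_mul_householder, sub_eq_zero, eq_comm,
    inv_smul_eq_iff₀ hs.ne', (householder_mulVec_involutive hv).eq_iff, mulVec_smul]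

end Hollow

theorem hollow_completion_unique_general (n : ℕ) (F : Matrix (Fin n) (Fin n) ℝ) :
    let v : Fin (n + 1) → ℝ := fun i => if i = Fin.last n then 1 + Real.sqrt (n + 1) else 1
    let Q : Matrix (Fin (n + 1)) (Fin (n + 1)) ℝ := 1 - (2 / (v ⬝ᵥ v)) • vecMulVec v v
    let B : (Fin n → ℝ) → ℝ → Matrix (Fin (n + 1)) (Fin (n + 1)) ℝ := fun f ξ =>
      Matrix.of fun i j =>
        Fin.lastCases (Fin.lastCases ξ (fun j' => f j') j)
          (fun i' => Fin.lastCases (f i') (fun j' => F i' j') j) i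
    let F0 : Matrix (Fin (n + 1)) (Fin (n + 1)) ℝ :=
      Matrix.of fun i j =>
        Fin.lastCases (0 : ℝ) (fun i' => Fin.lastCases (0 : ℝ) (fun j' => F i' j') j) i
    (∃! p : (Fin n → ℝ) × ℝ, ∀ k, (Q * B p.1 p.2 * Q) k k = 0) ∧
      (∀ p : (Fin n → ℝ) × ℝ, (∀ k, (Q * B p.1 p.2 * Q) k k = 0) →
        ∀ k : Fin (n + 1),
          (Fin.lastCases p.2 (fun i => 2 * p.1 i) k : ℝ) =
            Real.sqrt (n + 1) * Q.mulVec (fun j => (Q * F0 * Q) j j) k) := by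
  intro v Q B F0
  have hF0 : F0 = borderedMatrix F 0 0 := by
    ext i j
    induction i using Fin.lastCases <;> induction j using Fin.lastCases <;>
      simp [F0, borderedMatrix]
  have hollow_iff (p : (Fin n → ℝ) × ℝ) : (∀ k, (Q * B p.1 p.2 * Q) k k = 0) ↔
      borderVec p.1 p.2 = Real.sqrt (n + 1) • Q *ᵥ diag (Q * F0 * Q) := by
    rw [hF0]
    exact funext_iff.symm.trans
      (diag_householder_mul_borderedMatrix_mul_householder_eq_zero_iff F p.1 p.2)
  refine ⟨?_, fun p hp => congrFun ((hollow_iff p).1 hp)⟩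
  simp only [hollow_iff]
  exact borderVec_bijective.existsUnique _

theorem hollow_completion_unique (n : ℕ) (F : Matrix (Fin n) (Fin n) ℝ) (hF : F.IsSymm) :
    let v : Fin (n + 1) → ℝ := fun i => if i = Fin.last n then 1 + Real.sqrt (n + 1) else 1
    let Q : Matrix (Fin (n + 1)) (Fin (n + 1)) ℝ := 1 - (2 / (v ⬝ᵥ v)) • vecMulVec v v
    let B : (Fin n → ℝ) → ℝ → Matrix (Fin (n + 1)) (Fin (n + 1)) ℝ := fun f ξ =>
      Matrix.of fun i j =>
        Fin.lastCases (Fin.lastCases ξ (fun j' => f j') j)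
          (fun i' => Fin.lastCases (f i') (fun j' => F i' j') j) i
    let F0 : Matrix (Fin (n + 1)) (Fin (n + 1)) ℝ :=
      Matrix.of fun i j =>
        Fin.lastCases (0 : ℝ) (fun i' => Fin.lastCases (0 : ℝ) (fun j' => F i' j') j) i
    (∃! p : (Fin n → ℝ) × ℝ, ∀ k, (Q * B p.1 p.2 * Q) k k = 0) ∧
      (∀ p : (Fin n → ℝ) × ℝ, (∀ k, (Q * B p.1 p.2 * Q) k k = 0) →
        ∀ k : Fin (n + 1),
          (Fin.lastCases p.2 (fun i => 2 * p.1 i) k : ℝ) =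
            Real.sqrt (n + 1) * Q.mulVec (fun j => (Q * F0 * Q) j j) k) :=
  hollow_completion_unique_general n F
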